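/- Let $\mu_1,\ldots,\mu_n$ be real numbers with $\sum_i \mu_i = 0$ and $\sum_i \mu_i^2 = B^2$ where $B \geq 0$. If $\left|\sum_i \mu_i^3\right| = \frac{n-2}{\sqrt{n(n-1)}} B^3$, then at least $n-1$ of the $\mu_i$ are equal. -/

import Mathlib

/-!
Put `t = B / √(n (n - 1))`. Cauchy–Schwarz gives `μ j ≤ (n - 1) t` for every `j`, so the cubic
`(x + t)² (x - (n - 1) t)` is nonpositive at every `μ j`. Using the first two moments, its sum over
`j` is `∑ μ j ^ 3 - (n - 2) n (n - 1) t³`, which vanishes in the equality case; hence every `μ j` is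
`-t` or `(n - 1) t`, and `∑ μ j = 0` leaves room for at most one of the latter. A negative cubic
sum is reduced to a positive one by replacing `μ` with `-μ`.
-/

open Finset

section Okumura

variable {ι : Type*} [Fintype ι] {μ : ι → ℝ} {t : ℝ}

local notation "N" => (Fintype.card ι : ℝ)

/-- Cauchy–Schwarz applied to the other coordinates, whose sum is `-μ j`. -/
lemma card_mul_sq_le_of_sum_eq_zero (h1 : ∑ i, μ i = 0) (j : ι) :
    N * μ j ^ 2 ≤ (N - 1) * ∑ i, μ i ^ 2 := by
  classical
  have hcs := sq_sum_le_card_mul_sum_sq (s := univ.erase j) (f := μ)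
  have hcard : ((univ.erase j).card : ℝ) = N - 1 := by
    rw [card_erase_of_mem (mem_univ j), card_univ,
      Nat.cast_sub (Fintype.card_pos_iff.mpr ⟨j⟩), Nat.cast_one]
  rw [← add_sum_erase univ μ (mem_univ j)] at h1
  rw [← add_sum_erase univ (fun i => μ i ^ 2) (mem_univ j)]
  rw [hcard, show ∑ i ∈ univ.erase j, μ i = -μ j by linarith] at hcs
  nlinarith

lemma le_of_sum_eq_zero_of_sum_sq_eq (h1 : ∑ i, μ i = 0)
    (h2 : ∑ i, μ i ^ 2 = N * (N - 1) * t ^ 2) (ht : 0 ≤ t) (j : ι) :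
    μ j ≤ (N - 1) * t := by
  have hN : 1 ≤ N := by exact_mod_cast Fintype.card_pos_iff.mpr ⟨j⟩
  have hsq : N * μ j ^ 2 ≤ N * ((N - 1) * t) ^ 2 := by
    nlinarith [card_mul_sq_le_of_sum_eq_zero h1 j]
  exact le_of_sq_le_sq (le_of_mul_le_mul_left hsq (by linarith)) (by nlinarith)

lemma sum_sq_add_mul_sub_eq (h1 : ∑ i, μ i = 0) (h2 : ∑ i, μ i ^ 2 = N * (N - 1) * t ^ 2) :
    ∑ i, (μ i + t) ^ 2 * (μ i - (N - 1) * t) =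
      ∑ i, μ i ^ 3 - (N - 2) * N * (N - 1) * t ^ 3 := by
  have hexpand : ∀ i, (μ i + t) ^ 2 * (μ i - (N - 1) * t) =
      μ i ^ 3 + (3 - N) * t * μ i ^ 2 + (3 - 2 * N) * t ^ 2 * μ i - (N - 1) * t ^ 3 := by
    intro i; ring
  simp only [hexpand, sum_sub_distrib, sum_add_distrib, ← mul_sum, sum_const, card_univ,
    nsmul_eq_mul, h1, h2]
  ring

lemma eq_neg_or_eq_of_sum_cube_eq (h1 : ∑ i, μ i = 0)
    (h2 : ∑ i, μ i ^ 2 = N * (N - 1) * t ^ 2) (h3 : ∑ i, μ i ^ 3 = (N - 2) * N * (N - 1) * t ^ 3)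
    (ht : 0 ≤ t) (j : ι) : μ j = -t ∨ μ j = (N - 1) * t := by
  have hnonpos : ∀ i ∈ univ, (μ i + t) ^ 2 * (μ i - (N - 1) * t) ≤ 0 := fun i _ =>
    mul_nonpos_of_nonneg_of_nonpos (sq_nonneg _)
      (sub_nonpos.mpr (le_of_sum_eq_zero_of_sum_sq_eq h1 h2 ht i))
  have hsum : ∑ i, (μ i + t) ^ 2 * (μ i - (N - 1) * t) = 0 := by
    rw [sum_sq_add_mul_sub_eq h1 h2, h3, sub_self]
  rcases mul_eq_zero.mp ((sum_eq_zero_iff_of_nonpos hnonpos).mp hsum j (mem_univ j)) with h | h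
  · exact Or.inl (eq_neg_of_add_eq_zero_left (pow_eq_zero_iff two_ne_zero |>.mp h))
  · exact Or.inr (sub_eq_zero.mp h)

/-- Each `μ j + t` is `0` or `n t`, and they add up to `n t`. -/
lemma card_filter_ne_neg_le_one (h1 : ∑ i, μ i = 0)
    (hval : ∀ j, μ j = -t ∨ μ j = (N - 1) * t) :
    #{j | μ j ≠ -t} ≤ 1 := by
  have hshift : ∀ j, μ j + t = if μ j ≠ -t then N * t else 0 := by
    intro j
    rcases hval j with h | h <;> split_ifs <;> first | linarith | simp_all
  have htotal : (#{j | μ j ≠ -t} : ℝ) * (N * t) = N * t := by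
    rw [← nsmul_eq_mul, ← sum_const, sum_filter, ← sum_congr rfl fun j _ => hshift j,
      sum_add_distrib, h1, sum_const, card_univ, nsmul_eq_mul, zero_add]
  by_cases hNt : N * t = 0
  · refine card_le_one.mpr fun a ha _ _ => absurd ?_ (mem_filter.mp ha).2
    have := hshift a
    rw [if_pos (mem_filter.mp ha).2, hNt] at this
    linarith
  · have hone : (#{j | μ j ≠ -t} : ℝ) = 1 := by simpa [hNt] using htotal
    exact_mod_cast hone.le

lemma card_sub_one_le_card_filter_eq_neg (h1 : ∑ i, μ i = 0)
    (h2 : ∑ i, μ i ^ 2 = N * (N - 1) * t ^ 2) (h3 : ∑ i, μ i ^ 3 = (N - 2) * N * (N - 1) * t ^ 3)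
    (ht : 0 ≤ t) : Fintype.card ι - 1 ≤ #{j | μ j = -t} := by
  have hle := card_filter_ne_neg_le_one h1 (eq_neg_or_eq_of_sum_cube_eq h1 h2 h3 ht)
  have hsplit := card_filter_add_card_filter_not (s := univ) (p := fun j => μ j = -t)
  simp only [card_univ, ← ne_eq] at hsplit
  omega

end Okumura

theorem okumura_equality (n : ℕ) (hn : 2 ≤ n) (μ : Fin n → ℝ) (B : ℝ) (hB : 0 ≤ B)
    (h1 : ∑ i, μ i = 0) (h2 : ∑ i, (μ i) ^ 2 = B ^ 2)
    (heq : |∑ i, (μ i) ^ 3| = ((n : ℝ) - 2) / Real.sqrt ((n : ℝ) * ((n : ℝ) - 1)) * B ^ 3) :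
    ∃ x : ℝ, n - 1 ≤ (Finset.univ.filter (fun i => μ i = x)).card := by
  have hn' : (2 : ℝ) ≤ n := by exact_mod_cast hn
  set s := Real.sqrt ((n : ℝ) * ((n : ℝ) - 1))
  have hs : 0 < s := Real.sqrt_pos.mpr (by nlinarith)
  have hs2 : s ^ 2 = n * (n - 1) := Real.sq_sqrt (by nlinarith)
  set t := B / s
  have ht : 0 ≤ t := div_nonneg hB hs.le
  have hBt : B = t * s := (div_mul_cancel₀ B hs.ne').symm
  have h2' : ∑ i, μ i ^ 2 = (Fintype.card (Fin n) : ℝ) * (Fintype.card (Fin n) - 1) * t ^ 2 := by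
    rw [h2, hBt, mul_pow, hs2, Fintype.card_fin]; ring
  have hcube : ((n : ℝ) - 2) / s * B ^ 3 =
      ((Fintype.card (Fin n) : ℝ) - 2) * Fintype.card (Fin n) * (Fintype.card (Fin n) - 1) * t ^ 3 := by
    rw [hBt, Fintype.card_fin, mul_assoc _ (n : ℝ), ← hs2]
    field_simp
  have hcube_nonneg : 0 ≤ ((n : ℝ) - 2) / s * B ^ 3 := by
    have := sub_nonneg.mpr hn'
    positivity
  rcases (abs_eq hcube_nonneg).mp heq with hpos | hneg
  · refine ⟨-t, ?_⟩
    simpa using card_sub_one_le_card_filter_eq_neg h1 h2' (hpos.trans hcube) ht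
  · refine ⟨t, ?_⟩
    have hneg_cube : ∑ i, (-μ i) ^ 3 = -∑ i, μ i ^ 3 := by
      simp only [Odd.neg_pow (by decide : Odd 3), sum_neg_distrib]
    simpa using card_sub_one_le_card_filter_eq_neg (μ := fun i => -μ i)
      (by simp [h1]) (by simpa using h2') (by rw [hneg_cube, hneg, hcube, neg_neg]) ht
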